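/- For any finite connected simple graphs G and H, dmg(G □ H) ≤ max{ dmg(G)·|V(H)| , dmg'(H)·|V(G)| }. -/

import Mathlib

open SimpleGraph

/-!
Formalization of the game of Cops and Robber (one cop, one robber) and the damage number.

Round 0: the cop chooses a starting vertex, then the robber chooses a starting vertex.
In each subsequent round the cop moves to an adjacent vertex or passes, after which the
robber moves to an adjacent vertex or passes.  Strategies are modelled as functions of
the full history of positions (most recent first).
-/

/-- A cop strategy: an initial vertex together with a move function taking the history of
cop positions (most recent first, nonempty) and of robber positions (most recent first)
to the cop's next position. -/
structure CopStrategy (V : Type*) where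
  init : V
  move : List V → List V → V

/-- A robber strategy: an initial vertex chosen in response to the cop's initial vertex,
together with a move function taking the history of cop positions (most recent first,
including the cop's move from the current round) and of robber positions (most recent
first) to the robber's next position. -/
structure RobberStrategy (V : Type*) where
  init : V → V
  move : List V → List V → V

variable {V : Type*}

/-- A cop move function is legal for `G` if from any position it either passes or
moves along an edge of `G`. -/
def LegalCopMove (G : SimpleGraph V) (cs : List V → List V → V) : Prop :=
  ∀ (c : V) (ch rh : List V), cs (c :: ch) rh = c ∨ G.Adj c (cs (c :: ch) rh)

/-- A robber move function is legal for `G` if from any position it either passes or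
moves along an edge of `G`. -/
def LegalRobMove (G : SimpleGraph V) (rs : List V → List V → V) : Prop :=
  ∀ (r : V) (ch rh : List V), rs ch (r :: rh) = r ∨ G.Adj r (rs ch (r :: rh))

/-- A legal cop strategy: every move passes or goes along an edge. -/
def CopStrategy.Legal (G : SimpleGraph V) (CS : CopStrategy V) : Prop :=
  LegalCopMove G CS.move

/-- A legal robber strategy: every move passes or goes along an edge. -/
def RobberStrategy.Legal (G : SimpleGraph V) (RS : RobberStrategy V) : Prop :=
  LegalRobMove G RS.move

/-- `play CS RS n = (cₙ, rₙ, earlier cop positions, earlier robber positions)`: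
the state of the game after round `n`, when the cop plays `CS` and the robber plays `RS`.
In each round the cop moves first, then the robber moves. -/
def play (CS : CopStrategy V) (RS : RobberStrategy V) : ℕ → V × V × List V × List V
  | 0 => (CS.init, RS.init CS.init, [], [])
  | n + 1 =>
    let p := play CS RS n
    let c := CS.move (p.1 :: p.2.2.1) (p.2.1 :: p.2.2.2)
    let r := RS.move (c :: p.1 :: p.2.2.1) (p.2.1 :: p.2.2.2)
    (c, r, p.1 :: p.2.2.1, p.2.1 :: p.2.2.2)

/-- The cop's position after its move in round `n`. -/
def copPos (CS : CopStrategy V) (RS : RobberStrategy V) (n : ℕ) : V := (play CS RS n).1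

/-- The robber's position after its move in round `n`. -/
def robPos (CS : CopStrategy V) (RS : RobberStrategy V) (n : ℕ) : V := (play CS RS n).2.1

/-- The robber damages `v`: at the end of some round `n` the robber occupies `v`, having
never been captured up to that point (neither by moving onto the cop, nor by the cop's
move in any round up to and including round `n + 1`); it then passes or moves in
round `n + 1`, damaging `v`. -/
def Damages (CS : CopStrategy V) (RS : RobberStrategy V) (v : V) : Prop :=
  ∃ n, robPos CS RS n = v ∧
    ∀ k ≤ n, copPos CS RS k ≠ robPos CS RS k ∧ copPos CS RS (k + 1) ≠ robPos CS RS k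

/-- The set of vertices damaged by the robber during the play of `CS` against `RS`. -/
def damageSet (CS : CopStrategy V) (RS : RobberStrategy V) : Set V :=
  {v | Damages CS RS v}

/-- The damage number of `G`: the minimum over legal cop strategies of the maximum over
legal robber strategies of the number of distinct damaged vertices. -/
noncomputable def dmg (G : SimpleGraph V) : ℕ :=
  sInf { n | ∃ CS : CopStrategy V, CS.Legal G ∧
    ∀ RS : RobberStrategy V, RS.Legal G → (damageSet CS RS).ncard ≤ n }

/-- A cop strategy passes during the first round. -/
def CopStrategy.PassesFirst (CS : CopStrategy V) : Prop :=
  ∀ r : V, CS.move [CS.init] [r] = CS.init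

/-- The damage number of `G` when the cop is required to pass during the first round. -/
noncomputable def dmg' (G : SimpleGraph V) : ℕ :=
  sInf { n | ∃ CS : CopStrategy V, CS.Legal G ∧ CS.PassesFirst ∧
    ∀ RS : RobberStrategy V, RS.Legal G → (damageSet CS RS).ncard ≤ n }

/-- The eccentricity of a vertex: the maximum distance from `u` to any vertex. -/
noncomputable def ecc (G : SimpleGraph V) (u : V) : ℕ := sSup (Set.range (G.dist u))

/-- The radius of a graph: the minimum eccentricity over all vertices. -/
noncomputable def gRadius (G : SimpleGraph V) : ℕ := sInf (Set.range (ecc G))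

/-!
The cop plays a strategy for `G` on the first coordinate and a strategy for `H` that passes in
the first round on the second coordinate. A robber move in one coordinate is answered by the
strategy of that coordinate, and a pass by a pass, so each factor game is played against the
projection of the robber with repetitions removed; once the projection to a factor has been
caught there, the cop copies the robber's moves in that factor. When both projections are
caught the robber is caught. Hence, if the projection to `G` is caught first, the second
coordinate of every damaged vertex is damaged in the game on `H`, and otherwise the first
coordinate is damaged in the game on `G`. The first-round pass on `H` keeps the cop's first
move inside one coordinate.
-/

/-- The robber's positions up to round `n`, most recent first. -/
def robHist (CS : CopStrategy V) (RS : RobberStrategy V) (n : ℕ) : List V :=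
  robPos CS RS n :: (play CS RS n).2.2.2

def copHist (CS : CopStrategy V) (RS : RobberStrategy V) (n : ℕ) : List V :=
  copPos CS RS n :: (play CS RS n).2.2.1

section Play

variable (CS : CopStrategy V) (RS : RobberStrategy V)

lemma robHist_succ (n : ℕ) : robHist CS RS (n + 1) = robPos CS RS (n + 1) :: robHist CS RS n :=
  rfl

lemma copPos_succ (n : ℕ) : copPos CS RS (n + 1) = CS.move (copHist CS RS n) (robHist CS RS n) :=
  rfl

lemma robPos_succ (n : ℕ) :
    robPos CS RS (n + 1) = RS.move (copPos CS RS (n + 1) :: copHist CS RS n) (robHist CS RS n) :=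
  rfl

lemma forall_head?_tail_robHist {G : SimpleGraph V} (hRS : RS.Legal G) (n : ℕ) :
    ∀ s ∈ (robHist CS RS n).tail.head?, robPos CS RS n = s ∨ G.Adj s (robPos CS RS n) := by
  cases n with
  | zero => simp [robHist, play]
  | succ n =>
    rw [robHist_succ, List.tail_cons, robHist, List.head?_cons]
    rintro s ⟨⟩
    exact hRS _ _ _

end Play

namespace CopStrategy

variable (CS : CopStrategy V)

/-- The cop's positions, most recent first, after answering the robber history `l`. -/
def replies : List V → List V
  | [] => [CS.init]
  | r :: l => CS.move (replies l) (r :: l) :: replies l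

def reply (l : List V) : V := (CS.replies l).headD CS.init

def Catches : List V → Prop
  | [] => False
  | r :: l => Catches l ∨ CS.reply l = r ∨ CS.reply (r :: l) = r

lemma catches_cons (r : V) (l : List V) (h : CS.Catches l) : CS.Catches (r :: l) :=
  Or.inl h

lemma replies_eq_cons (l : List V) : ∃ t, CS.replies l = CS.reply l :: t := by
  cases l <;> exact ⟨_, rfl⟩

lemma reply_cons_eq_or_adj {G : SimpleGraph V} (hCS : CS.Legal G) (r : V) (l : List V) :
    CS.reply (r :: l) = CS.reply l ∨ G.Adj (CS.reply l) (CS.reply (r :: l)) := by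
  obtain ⟨t, ht⟩ := CS.replies_eq_cons l
  have h := hCS (CS.reply l) t (r :: l)
  rwa [← ht] at h

variable (RS : RobberStrategy V)

lemma copHist_eq_replies (n : ℕ) : copHist CS RS n = CS.replies (robHist CS RS n).tail := by
  induction n with
  | zero => rfl
  | succ n ih =>
    show copPos CS RS (n + 1) :: copHist CS RS n = CS.replies (robHist CS RS n)
    rw [copPos_succ, ih]
    rfl

lemma copPos_eq_reply (n : ℕ) : copPos CS RS n = CS.reply (robHist CS RS n).tail := by
  rw [reply, ← copHist_eq_replies]
  rfl

lemma copPos_succ_eq_reply (n : ℕ) : copPos CS RS (n + 1) = CS.reply (robHist CS RS n) :=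
  CS.copPos_eq_reply RS (n + 1)

lemma catches_robHist_iff (n : ℕ) :
    CS.Catches (robHist CS RS n) ↔
      ∃ k ≤ n, copPos CS RS k = robPos CS RS k ∨ copPos CS RS (k + 1) = robPos CS RS k := by
  induction n with
  | zero =>
    simp only [nonpos_iff_eq_zero, exists_eq_left, copPos_succ_eq_reply, CS.copPos_eq_reply RS 0]
    exact or_iff_right id
  | succ n ih =>
    simp only [Nat.le_add_one_iff, or_and_right, exists_or, exists_eq_left]
    rw [← ih, copPos_succ_eq_reply, copPos_succ_eq_reply, robHist_succ]
    rfl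

lemma mem_damageSet_iff (v : V) :
    v ∈ damageSet CS RS ↔ ∃ n, robPos CS RS n = v ∧ ¬ CS.Catches (robHist CS RS n) := by
  simp only [damageSet, Damages, Set.mem_ofPred_eq, catches_robHist_iff, not_exists, not_and,
    not_or]

noncomputable def shadowReply (l : List V) : V :=
  open Classical in if CS.Catches l then l.headD CS.init else CS.reply l

lemma shadowReply_of_catches {l : List V} (h : CS.Catches l) :
    CS.shadowReply l = l.headD CS.init := by
  classical exact if_pos h

lemma shadowReply_of_not_catches {l : List V} (h : ¬ CS.Catches l) :
    CS.shadowReply l = CS.reply l := by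
  classical exact if_neg h

lemma shadowReply_nil : CS.shadowReply [] = CS.init :=
  CS.shadowReply_of_not_catches id

lemma shadowReply_singleton (hCS : CS.PassesFirst) (r : V) : CS.shadowReply [r] = CS.init := by
  have hpass : CS.reply [r] = CS.init := hCS r
  by_cases h : CS.Catches [r]
  · rw [shadowReply_of_catches _ h]
    rcases h with h | h | h
    · exact h.elim
    · exact h.symm
    · exact h.symm.trans hpass
  · rw [shadowReply_of_not_catches _ h, hpass]

lemma shadowReply_cons_eq_or_adj {G : SimpleGraph V} (hCS : CS.Legal G) {r : V} {l : List V}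
    (hr : ∀ s ∈ l.head?, G.Adj s r) :
    CS.shadowReply (r :: l) = CS.shadowReply l ∨
      G.Adj (CS.shadowReply l) (CS.shadowReply (r :: l)) := by
  by_cases hl : CS.Catches l
  · cases l with
    | nil => exact hl.elim
    | cons s l =>
      rw [shadowReply_of_catches _ hl, shadowReply_of_catches (l := r :: s :: l) _ (Or.inl hl)]
      exact Or.inr (hr s rfl)
  rw [shadowReply_of_not_catches _ hl]
  by_cases hrl : CS.Catches (r :: l)
  · rw [shadowReply_of_catches _ hrl]
    rcases hrl with h | h | h
    · exact absurd h hl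
    · exact Or.inl h.symm
    · rw [← h]
      exact CS.reply_cons_eq_or_adj hCS r l
  · rw [shadowReply_of_not_catches _ hrl]
    exact CS.reply_cons_eq_or_adj hCS r l

def DamageAtMost (G : SimpleGraph V) (n : ℕ) : Prop :=
  ∀ RS : RobberStrategy V, RS.Legal G → (damageSet CS RS).ncard ≤ n

lemma damageAtMost_card [Finite V] (G : SimpleGraph V) :
    CS.DamageAtMost G (Nat.card V) :=
  fun _ _ => Set.ncard_le_card _

def stay (v : V) : CopStrategy V := ⟨v, fun ch _ => ch.headD v⟩

lemma stay_legal (G : SimpleGraph V) (v : V) : (stay v).Legal G :=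
  fun _ _ _ => Or.inl rfl

lemma stay_passesFirst (v : V) : (stay v).PassesFirst :=
  fun _ => rfl

end CopStrategy

def GrowsAlong (G : SimpleGraph V) (L : ℕ → List V) : Prop :=
  ∀ n, L (n + 1) = L n ∨ ∃ x, (∀ y ∈ (L n).head?, G.Adj y x) ∧ L (n + 1) = x :: L n

namespace GrowsAlong

variable {G : SimpleGraph V} {L : ℕ → List V}

lemma length_succ_of_ne (hL : GrowsAlong G L) {n : ℕ} (h : L (n + 1) ≠ L n) :
    (L (n + 1)).length = (L n).length + 1 := by
  rcases hL n with h' | ⟨x, -, h'⟩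
  · exact absurd h' h
  · rw [h', List.length_cons]

lemma length_mono (hL : GrowsAlong G L) : Monotone fun n => (L n).length := by
  refine monotone_nat_of_le_succ fun n => ?_
  by_cases h : L (n + 1) = L n
  · rw [h]
  · simp only [hL.length_succ_of_ne h, Nat.le_add_right]

lemma eq_of_eq_of_ne (hL : GrowsAlong G L) {m n : ℕ} (hmn : L m = L n) (hm : L (m + 1) ≠ L m)
    (hn : L (n + 1) ≠ L n) : m = n := by
  have key : ∀ {a b}, L a = L b → L (a + 1) ≠ L a → ¬ a < b := fun hab ha hlt => by
    have := hL.length_mono (Nat.succ_le_of_lt hlt)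
    simp only [hL.length_succ_of_ne ha, hab] at this
    omega
  exact le_antisymm (not_lt.mp (key hmn.symm hn)) (not_lt.mp (key hmn hm))

lemma mono (hL : GrowsAlong G L) {P : List V → Prop} (hP : ∀ x l, P l → P (x :: l))
    {m n : ℕ} (hmn : m ≤ n) (hm : P (L m)) : P (L n) := by
  induction n, hmn using Nat.le_induction with
  | base => exact hm
  | succ n _ ih =>
    rcases hL n with h | ⟨x, -, h⟩
    · rwa [h]
    · rw [h]
      exact hP x _ ih

end GrowsAlong

/-- The robber who walks along the lists `L n`, whatever the cop does: at the history `L n` it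
moves to the new head of `L (n + 1)`. -/
noncomputable def RobberStrategy.follow (L : ℕ → List V) (x₀ : V) : RobberStrategy V where
  init _ := x₀
  move _ rh := open Classical in
    if h : ∃ n, L n = rh ∧ L (n + 1) ≠ rh then (L (h.choose + 1)).headD x₀
    else rh.headD x₀

namespace RobberStrategy

variable {G : SimpleGraph V} {L : ℕ → List V} {x₀ : V}

lemma follow_move (hL : GrowsAlong G L) {n : ℕ} {x : V} (h : L (n + 1) = x :: L n)
    (ch : List V) : (follow L x₀).move ch (L n) = x := by
  have hex : ∃ m, L m = L n ∧ L (m + 1) ≠ L n :=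
    ⟨n, rfl, by rw [h]; exact List.cons_ne_self x (L n)⟩
  obtain ⟨hm, hm'⟩ := hex.choose_spec
  have hchoose : hex.choose = n :=
    hL.eq_of_eq_of_ne hm (by rwa [hm]) (h ▸ List.cons_ne_self x (L n))
  simp only [follow, dif_pos hex, hchoose, h, List.headD_cons]

lemma follow_legal (hL : GrowsAlong G L) : (follow L x₀).Legal G := by
  intro r ch rh
  simp only [follow]
  split_ifs with h
  · obtain ⟨hm, hm'⟩ := h.choose_spec
    rcases hL h.choose with h' | ⟨x, hadj, h'⟩
    · exact absurd (h'.trans hm) hm'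
    · rw [h', List.headD_cons]
      exact Or.inr (hadj r (by rw [hm]; rfl))
  · exact Or.inl rfl

lemma exists_robHist_follow (hL : GrowsAlong G L) (hL₀ : L 0 = [x₀]) (CS : CopStrategy V)
    (n : ℕ) : ∃ j, robHist CS (follow L x₀) j = L n := by
  induction n with
  | zero => exact ⟨0, hL₀.symm⟩
  | succ n ih =>
    obtain ⟨j, hj⟩ := ih
    rcases hL n with h | ⟨x, -, h⟩
    · exact ⟨j, hj.trans h.symm⟩
    · refine ⟨j + 1, ?_⟩
      rw [robHist_succ, robPos_succ, hj, follow_move hL h, h]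

lemma headD_mem_damageSet_follow (hL : GrowsAlong G L) (hL₀ : L 0 = [x₀]) {CS : CopStrategy V}
    {n : ℕ} (hn : ¬ CS.Catches (L n)) : (L n).headD x₀ ∈ damageSet CS (follow L x₀) := by
  obtain ⟨j, hj⟩ := exists_robHist_follow hL hL₀ CS n
  rw [CS.mem_damageSet_iff]
  exact ⟨j, by rw [← hj]; rfl, hj ▸ hn⟩

end RobberStrategy

section ProjTrace

variable {W : Type*} (f : W → V)

noncomputable def projTrace (l : List W) : List V :=
  open Classical in (l.map f).destutter (· ≠ ·)

lemma projTrace_nil : projTrace f [] = [] := rfl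

lemma projTrace_singleton (r : W) : projTrace f [r] = [f r] := rfl

lemma projTrace_cons (r : W) (l : List W) : ∃ t, projTrace f (r :: l) = f r :: t := by
  classical
  suffices ∀ l' : List V, ∃ t, l'.destutter' (· ≠ ·) (f r) = f r :: t from this (l.map f)
  intro l'
  induction l' with
  | nil => exact ⟨[], rfl⟩
  | cons b l' ih =>
    rw [List.destutter'_cons]
    split_ifs
    exacts [⟨_, rfl⟩, ih]

lemma headD_projTrace_robHist (CS : CopStrategy W) (RS : RobberStrategy W) (n : ℕ) (d : V) :
    (projTrace f (robHist CS RS n)).headD d = f (robPos CS RS n) := by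
  obtain ⟨t, ht⟩ := projTrace_cons f (robPos CS RS n) (robHist CS RS n).tail
  exact congrArg (List.headD · d) ht

lemma projTrace_cons_cons_of_eq {r s : W} (h : f r = f s) (l : List W) :
    projTrace f (r :: s :: l) = projTrace f (s :: l) := by
  classical
  simp [projTrace, List.destutter_cons', h]

lemma projTrace_cons_cons_of_ne {r s : W} (h : f r ≠ f s) (l : List W) :
    projTrace f (r :: s :: l) = f r :: projTrace f (s :: l) := by
  classical
  simp [projTrace, List.destutter_cons', h]

lemma growsAlong_projTrace_robHist {G : SimpleGraph V} {K : SimpleGraph W}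
    (hf : ∀ a b, K.Adj a b → f a ≠ f b → G.Adj (f a) (f b)) {CS : CopStrategy W}
    {RS : RobberStrategy W} (hRS : RS.Legal K) :
    GrowsAlong G fun n => projTrace f (robHist CS RS n) := by
  intro n
  obtain ⟨t, ht⟩ : ∃ t, projTrace f (robHist CS RS n) = f (robPos CS RS n) :: t :=
    projTrace_cons f _ _
  by_cases h : f (robPos CS RS (n + 1)) = f (robPos CS RS n)
  · exact Or.inl (projTrace_cons_cons_of_eq f h _)
  refine Or.inr ⟨_, fun y hy => ?_, projTrace_cons_cons_of_ne f h _⟩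
  simp only [ht, List.head?_cons, Option.mem_some_iff] at hy
  subst hy
  rcases hRS (robPos CS RS n) _ _ with heq | hadj
  · exact absurd (congrArg f heq) h
  · exact hf _ _ hadj (Ne.symm h)

lemma map_robPos_mem_damageSet_follow {G : SimpleGraph V} {K : SimpleGraph W}
    (hf : ∀ a b, K.Adj a b → f a ≠ f b → G.Adj (f a) (f b)) {CS : CopStrategy W}
    {RS : RobberStrategy W} (hRS : RS.Legal K) {C : CopStrategy V} {n : ℕ}
    (hn : ¬ C.Catches (projTrace f (robHist CS RS n))) :
    f (robPos CS RS n) ∈ damageSet C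
      (.follow (fun n => projTrace f (robHist CS RS n)) (f (robPos CS RS 0))) := by
  have h := RobberStrategy.headD_mem_damageSet_follow (growsAlong_projTrace_robHist f hf hRS)
    rfl hn
  rwa [headD_projTrace_robHist] at h

end ProjTrace

namespace SimpleGraph

variable {α β : Type*} {G : SimpleGraph α} {H : SimpleGraph β} {x y : α × β}

lemma boxProd_adj_fst_of_ne (h : (G □ H).Adj x y) (hne : x.1 ≠ y.1) : G.Adj x.1 y.1 :=
  ((boxProd_adj.mp h).resolve_right fun h' => hne h'.2).1

lemma boxProd_adj_snd_of_ne (h : (G □ H).Adj x y) (hne : x.2 ≠ y.2) : H.Adj x.2 y.2 :=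
  ((boxProd_adj.mp h).resolve_left fun h' => hne h'.2).1

end SimpleGraph

namespace CopStrategy

variable {α β : Type*} {G : SimpleGraph α} {H : SimpleGraph β} (CG : CopStrategy α)
  (CH : CopStrategy β)

noncomputable def boxReply (l : List (α × β)) : α × β :=
  (CG.shadowReply (projTrace Prod.fst l), CH.shadowReply (projTrace Prod.snd l))

variable (G H) in
/-- On histories that do not arise in play `boxReply` may be out of reach; the cop then passes. -/
noncomputable def boxProd : CopStrategy (α × β) where
  init := (CG.init, CH.init)
  move ch rh := open Classical in
    let c := ch.headD (CG.init, CH.init)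
    if boxReply CG CH rh = c ∨ (G □ H).Adj c (boxReply CG CH rh) then boxReply CG CH rh else c

lemma boxProd_move_of_eq_or_adj {c : α × β} {ch rh : List (α × β)}
    (h : boxReply CG CH rh = c ∨ (G □ H).Adj c (boxReply CG CH rh)) :
    (boxProd G H CG CH).move (c :: ch) rh = boxReply CG CH rh :=
  if_pos h

lemma boxProd_legal : (boxProd G H CG CH).Legal (G □ H) := by
  intro c ch rh
  by_cases h : boxReply CG CH rh = c ∨ (G □ H).Adj c (boxReply CG CH rh)
  · rwa [boxProd_move_of_eq_or_adj CG CH h]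
  · exact Or.inl (if_neg h)

lemma boxReply_nil : boxReply CG CH [] = (CG.init, CH.init) := by
  simp only [boxReply, projTrace_nil, shadowReply_nil]

lemma boxReply_cons_eq_or_adj (hCG : CG.Legal G) (hCH : CH.Legal H) (hpass : CH.PassesFirst)
    {r : α × β} {l : List (α × β)} (hr : ∀ s ∈ l.head?, r = s ∨ (G □ H).Adj s r) :
    boxReply CG CH (r :: l) = boxReply CG CH l ∨
      (G □ H).Adj (boxReply CG CH l) (boxReply CG CH (r :: l)) := by
  cases l with
  | nil =>
    have hG := CG.shadowReply_cons_eq_or_adj hCG (r := r.1) (l := []) (by simp)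
    simp only [boxReply, projTrace_singleton, projTrace_nil, CH.shadowReply_singleton hpass,
      CH.shadowReply_nil] at hG ⊢
    exact hG.imp (by rw [·]) boxProd_adj_left.mpr
  | cons s l =>
    rcases hr s rfl with rfl | hadj
    · left
      simp only [boxReply, projTrace_cons_cons_of_eq _ rfl]
    rcases hadj with ⟨hG, h₂⟩ | ⟨hH, h₁⟩
    · obtain ⟨tG, htG⟩ := projTrace_cons Prod.fst s l
      have := CG.shadowReply_cons_eq_or_adj hCG (r := r.1) (l := projTrace Prod.fst (s :: l))
        (by simp [htG, hG])
      simp only [boxReply, projTrace_cons_cons_of_ne Prod.fst hG.ne.symm,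
        projTrace_cons_cons_of_eq Prod.snd h₂.symm]
      exact this.imp (by rw [·]) boxProd_adj_left.mpr
    · obtain ⟨tH, htH⟩ := projTrace_cons Prod.snd s l
      have := CH.shadowReply_cons_eq_or_adj hCH (r := r.2) (l := projTrace Prod.snd (s :: l))
        (by simp [htH, hH])
      simp only [boxReply, projTrace_cons_cons_of_ne Prod.snd hH.ne.symm,
        projTrace_cons_cons_of_eq Prod.fst h₁.symm]
      exact this.imp (by rw [·]) boxProd_adj_right.mpr

lemma boxReply_of_catches {r : α × β} {l : List (α × β)}
    (hG : CG.Catches (projTrace Prod.fst (r :: l)))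
    (hH : CH.Catches (projTrace Prod.snd (r :: l))) :
    boxReply CG CH (r :: l) = r := by
  obtain ⟨tG, htG⟩ := projTrace_cons Prod.fst r l
  obtain ⟨tH, htH⟩ := projTrace_cons Prod.snd r l
  rw [boxReply, shadowReply_of_catches _ hG, shadowReply_of_catches _ hH, htG, htH]
  rfl

lemma copPos_boxProd (hCG : CG.Legal G) (hCH : CH.Legal H) (hpass : CH.PassesFirst)
    {RS : RobberStrategy (α × β)} (hRS : RS.Legal (G □ H)) (n : ℕ) :
    copPos (boxProd G H CG CH) RS n =
      boxReply CG CH (robHist (boxProd G H CG CH) RS n).tail := by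
  induction n with
  | zero => exact (boxReply_nil CG CH).symm
  | succ n ih =>
    have hstep := boxReply_cons_eq_or_adj CG CH hCG hCH hpass
      (forall_head?_tail_robHist (boxProd G H CG CH) RS hRS n)
    rw [copPos_succ, copHist, ih]
    exact boxProd_move_of_eq_or_adj CG CH hstep

variable {CG CH}

lemma catches_robHist_boxProd (hCG : CG.Legal G) (hCH : CH.Legal H) (hpass : CH.PassesFirst)
    {RS : RobberStrategy (α × β)} (hRS : RS.Legal (G □ H)) {n : ℕ}
    (hG : CG.Catches (projTrace Prod.fst (robHist (boxProd G H CG CH) RS n)))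
    (hH : CH.Catches (projTrace Prod.snd (robHist (boxProd G H CG CH) RS n))) :
    (boxProd G H CG CH).Catches (robHist (boxProd G H CG CH) RS n) := by
  refine ((boxProd G H CG CH).catches_robHist_iff RS n).mpr ⟨n, le_rfl, Or.inr ?_⟩
  rw [copPos_boxProd CG CH hCG hCH hpass hRS]
  exact boxReply_of_catches CG CH hG hH

lemma damageSet_boxProd_subset (hCG : CG.Legal G) (hCH : CH.Legal H) (hpass : CH.PassesFirst)
    {RS : RobberStrategy (α × β)} (hRS : RS.Legal (G □ H)) :
    (∃ RG : RobberStrategy α, RG.Legal G ∧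
      damageSet (boxProd G H CG CH) RS ⊆ damageSet CG RG ×ˢ Set.univ) ∨
    ∃ RH : RobberStrategy β, RH.Legal H ∧
      damageSet (boxProd G H CG CH) RS ⊆ Set.univ ×ˢ damageSet CH RH := by
  set P := boxProd G H CG CH
  have hfst : ∀ a b, (G □ H).Adj a b → a.1 ≠ b.1 → G.Adj a.1 b.1 :=
    fun _ _ => boxProd_adj_fst_of_ne
  have hsnd : ∀ a b, (G □ H).Adj a b → a.2 ≠ b.2 → H.Adj a.2 b.2 :=
    fun _ _ => boxProd_adj_snd_of_ne
  have hLG := growsAlong_projTrace_robHist Prod.fst hfst (CS := P) hRS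
  have hLH := growsAlong_projTrace_robHist Prod.snd hsnd (CS := P) hRS
  by_cases hfreeG : ∀ n, ¬ P.Catches (robHist P RS n) →
      ¬ CG.Catches (projTrace Prod.fst (robHist P RS n))
  · refine Or.inl ⟨_, RobberStrategy.follow_legal (x₀ := (robPos P RS 0).1) hLG,
      fun v hv => ?_⟩
    obtain ⟨n, rfl, hn⟩ := (P.mem_damageSet_iff RS v).mp hv
    exact ⟨map_robPos_mem_damageSet_follow Prod.fst hfst hRS (hfreeG n hn), trivial⟩
  · push Not at hfreeG
    obtain ⟨m, hm, hcaughtG⟩ := hfreeG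
    refine Or.inr ⟨_, RobberStrategy.follow_legal (x₀ := (robPos P RS 0).2) hLH,
      fun v hv => ?_⟩
    obtain ⟨n, rfl, hn⟩ := (P.mem_damageSet_iff RS v).mp hv
    refine ⟨trivial, map_robPos_mem_damageSet_follow Prod.snd hsnd hRS fun hHn => ?_⟩
    -- otherwise both projections would be caught at round `max m n`
    rcases le_total m n with hmn | hnm
    · exact hn <| catches_robHist_boxProd hCG hCH hpass hRS
        (hLG.mono CG.catches_cons hmn hcaughtG) hHn
    · exact hm <| catches_robHist_boxProd hCG hCH hpass hRS hcaughtG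
        (hLH.mono CH.catches_cons hnm hHn)

lemma boxProd_damageAtMost [Finite α] [Finite β] {a b : ℕ} (hCG : CG.Legal G)
    (hCH : CH.Legal H) (hpass : CH.PassesFirst) (haG : CG.DamageAtMost G a)
    (hbH : CH.DamageAtMost H b) :
    (boxProd G H CG CH).DamageAtMost (G □ H) (max (a * Nat.card β) (b * Nat.card α)) := by
  intro RS hRS
  rcases damageSet_boxProd_subset hCG hCH hpass hRS with ⟨RG, hRG, h⟩ | ⟨RH, hRH, h⟩
  · calc (damageSet _ RS).ncard
        ≤ (damageSet CG RG ×ˢ (Set.univ : Set β)).ncard := Set.ncard_le_ncard h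
      _ = (damageSet CG RG).ncard * Nat.card β := by rw [Set.ncard_prod, Set.ncard_univ]
      _ ≤ a * Nat.card β := Nat.mul_le_mul_right _ (haG RG hRG)
      _ ≤ _ := le_max_left _ _
  · calc (damageSet _ RS).ncard
        ≤ ((Set.univ : Set α) ×ˢ damageSet CH RH).ncard := Set.ncard_le_ncard h
      _ = (damageSet CH RH).ncard * Nat.card α := by
        rw [Set.ncard_prod, Set.ncard_univ, mul_comm]
      _ ≤ b * Nat.card α := Nat.mul_le_mul_right _ (hbH RH hRH)
      _ ≤ _ := le_max_right _ _

end CopStrategy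

lemma dmg_le {G : SimpleGraph V} {CS : CopStrategy V} {n : ℕ} (hCS : CS.Legal G)
    (h : CS.DamageAtMost G n) : dmg G ≤ n :=
  Nat.sInf_le ⟨CS, hCS, h⟩

lemma exists_damageAtMost_dmg [Finite V] [Nonempty V] (G : SimpleGraph V) :
    ∃ CS : CopStrategy V, CS.Legal G ∧ CS.DamageAtMost G (dmg G) :=
  Nat.sInf_mem (s := {n | ∃ CS : CopStrategy V, CS.Legal G ∧ CS.DamageAtMost G n})
    ⟨Nat.card V, .stay (Classical.arbitrary V), CopStrategy.stay_legal G _,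
      CopStrategy.damageAtMost_card _ G⟩

lemma exists_passesFirst_damageAtMost_dmg' [Finite V] [Nonempty V] (G : SimpleGraph V) :
    ∃ CS : CopStrategy V, CS.Legal G ∧ CS.PassesFirst ∧ CS.DamageAtMost G (dmg' G) :=
  Nat.sInf_mem
    (s := {n | ∃ CS : CopStrategy V, CS.Legal G ∧ CS.PassesFirst ∧ CS.DamageAtMost G n})
    ⟨Nat.card V, .stay (Classical.arbitrary V), CopStrategy.stay_legal G _,
      CopStrategy.stay_passesFirst _, CopStrategy.damageAtMost_card _ G⟩

lemma dmg_eq_zero_of_isEmpty [IsEmpty V] (G : SimpleGraph V) : dmg G = 0 :=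
  Nat.sInf_eq_zero.mpr <| .inr <| Set.eq_empty_of_forall_notMem fun _ ⟨CS, _⟩ =>
    isEmptyElim CS.init

theorem dmg_boxProd_le_max_general {α β : Type*} [Fintype α] [Fintype β]
    (G : SimpleGraph α) (H : SimpleGraph β) :
    dmg (G □ H) ≤ max (dmg G * Fintype.card β) (dmg' H * Fintype.card α) := by
  cases isEmpty_or_nonempty (α × β) with
  | inl _ => simp [dmg_eq_zero_of_isEmpty]
  | inr hne =>
    have : Nonempty α := hne.map Prod.fst
    have : Nonempty β := hne.map Prod.snd
    obtain ⟨CG, hCG, hCGdmg⟩ := exists_damageAtMost_dmg G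
    obtain ⟨CH, hCH, hpass, hCHdmg⟩ := exists_passesFirst_damageAtMost_dmg' H
    rw [← Nat.card_eq_fintype_card, ← Nat.card_eq_fintype_card]
    exact dmg_le (CopStrategy.boxProd_legal CG CH)
      (CopStrategy.boxProd_damageAtMost hCG hCH hpass hCGdmg hCHdmg)

/-- For any finite connected graphs `G` and `H`,
`dmg(G □ H) ≤ max {dmg(G)·|V(H)|, dmg'(H)·|V(G)|}`. -/
theorem dmg_boxProd_le_max {α β : Type*} [Fintype α] [Fintype β]
    (G : SimpleGraph α) (H : SimpleGraph β) (hG : G.Connected) (hH : H.Connected) :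
    dmg (G □ H) ≤ max (dmg G * Fintype.card β) (dmg' H * Fintype.card α) :=
  dmg_boxProd_le_max_general G H
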